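/- arXiv:1809.05442 — 3 statements merged into one kernel-verified Lean document; each statement's English description precedes it below -/
import Mathlib

section
/- Lemma 4, bound on A_i: Under the segregation and saturation constraints, for i = 1,2: if nᵢ > ñᵢ then q̃ᵢ = 0, hence qᵢ ≥ q̃ᵢ; symmetrically if ñᵢ > nᵢ then q̃ᵢ ≥ qᵢ. Consequently (nᵢ − ñᵢ)(qᵢ − q̃ᵢ) ≥ 0, and whenever nᵢ ≠ ñᵢ the quotient Aᵢ := (nᵢ − ñᵢ)/((nᵢ − ñᵢ) + (qᵢ − q̃ᵢ)) is well defined and satisfies 0 ≤ Aᵢ ≤ 1. -/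
/-!
If `ñᵢ < 1` then `ñᵢ p̃ = 0`: either `ñᵢ = 0`, or segregation kills the other species and
saturation then forces `p̃ = 0`. Hence `ñᵢ < nᵢ ≤ 1` gives `q̃ᵢ = 0 ≤ qᵢ`, and symmetrically,
so `nᵢ − ñᵢ` and `qᵢ − q̃ᵢ` have the same sign. For `d ≠ 0` and `d e ≥ 0` the quotient `d / (d + e)` equals `(1 + e/d)⁻¹ ∈ (0, 1]`.
-/

section Quotient

variable {K : Type*} [Field K] [LinearOrder K] [IsStrictOrderedRing K] {d e : K}

lemma add_ne_zero_of_mul_nonneg (hd : d ≠ 0) (h : 0 ≤ d * e) : d + e ≠ 0 := by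
  rcases hd.lt_or_gt with hd | hd
  · linarith [nonpos_of_mul_nonneg_right h hd]
  · linarith [nonneg_of_mul_nonneg_right h hd]

lemma div_add_mem_Icc_of_mul_nonneg (hd : d ≠ 0) (h : 0 ≤ d * e) :
    d / (d + e) ∈ Set.Icc 0 1 := by
  rcases hd.lt_or_gt with hd | hd
  · have he : e ≤ 0 := nonpos_of_mul_nonneg_right h hd
    have hde : d + e < 0 := by linarith
    exact ⟨div_nonneg_of_nonpos hd.le hde.le, (div_le_one_of_neg hde).2 (by linarith)⟩
  · have he : 0 ≤ e := nonneg_of_mul_nonneg_right h hd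
    have hde : 0 < d + e := by linarith
    exact ⟨div_nonneg hd.le hde.le, (div_le_one hde).2 (by linarith)⟩

end Quotient

lemma mul_eq_zero_of_saturated {a b t : ℝ} (hseg : a * b = 0) (hsat : (1 - (a + b)) * t = 0)
    (ha : a < 1) : a * t = 0 := by
  rcases mul_eq_zero.1 hseg with rfl | rfl
  · exact zero_mul t
  · rw [add_zero, mul_eq_zero] at hsat
    rw [hsat.resolve_left (by linarith), mul_zero]

section Component

variable {n p tn tp : ℝ}

lemma mul_sub_nonneg_of_vanishing (hq : 0 ≤ n * p) (htq : 0 ≤ tn * tp)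
    (h₁ : tn < n → tn * tp = 0) (h₂ : n < tn → n * p = 0) :
    0 ≤ (n - tn) * (n * p - tn * tp) := by
  rcases lt_trichotomy tn n with h | rfl | h
  · rw [h₁ h]
    exact mul_nonneg (by linarith) (by linarith)
  · simp
  · rw [h₂ h]
    exact mul_nonneg_of_nonpos_of_nonpos (by linarith) (by linarith)

lemma bound_A_of_vanishing (hn : 0 ≤ n) (hp : 0 ≤ p) (htn : 0 ≤ tn) (htp : 0 ≤ tp)
    (h₁ : tn < n → tn * tp = 0) (h₂ : n < tn → n * p = 0) :
    ((tn < n → tn * tp = 0 ∧ tn * tp ≤ n * p) ∧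
     (n < tn → n * p ≤ tn * tp) ∧
     0 ≤ (n - tn) * (n * p - tn * tp) ∧
     (n ≠ tn →
       (n - tn) + (n * p - tn * tp) ≠ 0 ∧
       0 ≤ (n - tn) / ((n - tn) + (n * p - tn * tp)) ∧
       (n - tn) / ((n - tn) + (n * p - tn * tp)) ≤ 1)) := by
  have hq : 0 ≤ n * p := mul_nonneg hn hp
  have htq : 0 ≤ tn * tp := mul_nonneg htn htp
  have hsign := mul_sub_nonneg_of_vanishing hq htq h₁ h₂
  refine ⟨fun h => ⟨h₁ h, h₁ h ▸ hq⟩, fun h => h₂ h ▸ htq, hsign, fun hne => ?_⟩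
  have hd : n - tn ≠ 0 := sub_ne_zero.2 hne
  exact ⟨add_ne_zero_of_mul_nonneg hd hsign, div_add_mem_Icc_of_mul_nonneg hd hsign⟩

end Component

/-- **Lemma 4, bound on `Aᵢ`.** Under the segregation and saturation constraints, for
`i = 1,2`: if `nᵢ > ñᵢ` then `q̃ᵢ = 0`, hence `qᵢ ≥ q̃ᵢ`; symmetrically if `ñᵢ > nᵢ` then
`q̃ᵢ ≥ qᵢ`.  Consequently `(nᵢ − ñᵢ)(qᵢ − q̃ᵢ) ≥ 0`, and whenever `nᵢ ≠ ñᵢ` the quotient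
`Aᵢ := (nᵢ − ñᵢ)/((nᵢ − ñᵢ) + (qᵢ − q̃ᵢ))` is well defined and satisfies `0 ≤ Aᵢ ≤ 1`.
Here `qᵢ := nᵢ p` and `q̃ᵢ := ñᵢ p̃`, tilde quantities being written `tn₁, tn₂, tp`. -/
theorem lemma4_bound_A
    (n₁ n₂ p tn₁ tn₂ tp : ℝ)
    (hn₁ : n₁ ∈ Set.Icc (0:ℝ) 1) (hn₂ : n₂ ∈ Set.Icc (0:ℝ) 1)
    (htn₁ : tn₁ ∈ Set.Icc (0:ℝ) 1) (htn₂ : tn₂ ∈ Set.Icc (0:ℝ) 1)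
    (hp : 0 ≤ p) (htp : 0 ≤ tp)
    (hseg : n₁ * n₂ = 0) (htseg : tn₁ * tn₂ = 0)
    (hsat : (1 - (n₁ + n₂)) * p = 0) (htsat : (1 - (tn₁ + tn₂)) * tp = 0) :
    ((tn₁ < n₁ → tn₁ * tp = 0 ∧ tn₁ * tp ≤ n₁ * p) ∧
     (n₁ < tn₁ → n₁ * p ≤ tn₁ * tp) ∧
     0 ≤ (n₁ - tn₁) * (n₁ * p - tn₁ * tp) ∧
     (n₁ ≠ tn₁ →
       (n₁ - tn₁) + (n₁ * p - tn₁ * tp) ≠ 0 ∧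
       0 ≤ (n₁ - tn₁) / ((n₁ - tn₁) + (n₁ * p - tn₁ * tp)) ∧
       (n₁ - tn₁) / ((n₁ - tn₁) + (n₁ * p - tn₁ * tp)) ≤ 1)) ∧
    ((tn₂ < n₂ → tn₂ * tp = 0 ∧ tn₂ * tp ≤ n₂ * p) ∧
     (n₂ < tn₂ → n₂ * p ≤ tn₂ * tp) ∧
     0 ≤ (n₂ - tn₂) * (n₂ * p - tn₂ * tp) ∧
     (n₂ ≠ tn₂ →
       (n₂ - tn₂) + (n₂ * p - tn₂ * tp) ≠ 0 ∧
       0 ≤ (n₂ - tn₂) / ((n₂ - tn₂) + (n₂ * p - tn₂ * tp)) ∧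
       (n₂ - tn₂) / ((n₂ - tn₂) + (n₂ * p - tn₂ * tp)) ≤ 1)) := by
  have hseg' : n₂ * n₁ = 0 := by rwa [mul_comm]
  have htseg' : tn₂ * tn₁ = 0 := by rwa [mul_comm]
  have hsat' : (1 - (n₂ + n₁)) * p = 0 := by rwa [add_comm]
  have htsat' : (1 - (tn₂ + tn₁)) * tp = 0 := by rwa [add_comm]
  exact
    ⟨bound_A_of_vanishing hn₁.1 hp htn₁.1 htp
      (fun h => mul_eq_zero_of_saturated htseg htsat (h.trans_le hn₁.2))
      (fun h => mul_eq_zero_of_saturated hseg hsat (h.trans_le htn₁.2)),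
    bound_A_of_vanishing hn₂.1 hp htn₂.1 htp
      (fun h => mul_eq_zero_of_saturated htseg' htsat' (h.trans_le hn₂.2))
      (fun h => mul_eq_zero_of_saturated hseg' hsat' (h.trans_le htn₂.2))⟩
end

section
/- Lemma 4, bound on B_i: Under the segregation and saturation constraints, for i = 1,2: if qᵢ > q̃ᵢ then nᵢ = 1 (in particular nᵢ ≥ ñᵢ); symmetrically if q̃ᵢ > qᵢ then ñᵢ = 1 ≥ nᵢ. Consequently (nᵢ − ñᵢ)(qᵢ − q̃ᵢ) ≥ 0, and whenever qᵢ ≠ q̃ᵢ the quotient Bᵢ := (qᵢ − q̃ᵢ)/((nᵢ − ñᵢ) + (qᵢ − q̃ᵢ)) is well defined and satisfies 0 ≤ Bᵢ ≤ 1. -/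
/-!
If `qᵢ = nᵢ p > 0` then segregation kills the other species and saturation forces
`nᵢ = 1`. So the larger of `qᵢ`, `q̃ᵢ` comes with density `1`, which dominates the other
density: `nᵢ - ñᵢ` and `qᵢ - q̃ᵢ` never have opposite signs, and `y / (x + y)` lies in
`[0, 1]` as soon as `0 ≤ x y`.
-/

open Set

lemma eq_one_of_mul_pos {n m p : ℝ} (hseg : n * m = 0) (hsat : (1 - (n + m)) * p = 0)
    (h : 0 < n * p) : n = 1 := by
  have hn : n ≠ 0 := left_ne_zero_of_mul h.ne'
  have hp : p ≠ 0 := right_ne_zero_of_mul h.ne'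
  have hm : m = 0 := (mul_eq_zero.1 hseg).resolve_left hn
  have : 1 - (n + m) = 0 := (mul_eq_zero.1 hsat).resolve_right hp
  linarith

lemma eq_one_and_le_of_mul_lt {n p tn tp : ℝ} (hsat : 0 < n * p → n = 1)
    (htn : tn ∈ Icc (0 : ℝ) 1) (htp : 0 ≤ tp) (h : tn * tp < n * p) : n = 1 ∧ tn ≤ n := by
  have hn : n = 1 := hsat ((mul_nonneg htn.1 htp).trans_lt h)
  exact ⟨hn, hn ▸ htn.2⟩

lemma add_ne_zero_of_mul_nonneg_s13 {x y : ℝ} (hxy : 0 ≤ x * y) (hy : y ≠ 0) : x + y ≠ 0 := by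
  intro h
  have : y = -x := by linarith
  subst this
  nlinarith [sq_pos_of_ne_zero (neg_ne_zero.1 hy)]

lemma div_add_mem_Icc_of_mul_nonneg_s13 {x y : ℝ} (hxy : 0 ≤ x * y) :
    y / (x + y) ∈ Icc (0 : ℝ) 1 := by
  rcases lt_trichotomy y 0 with hy | rfl | hy
  · have hx : x ≤ 0 := nonpos_of_mul_nonneg_left hxy hy
    have hden : x + y < 0 := by linarith
    exact ⟨div_nonneg_of_nonpos hy.le hden.le, (div_le_one_of_neg hden).2 (by linarith)⟩
  · simp
  · have hx : 0 ≤ x := nonneg_of_mul_nonneg_left hxy hy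
    have hden : 0 < x + y := by linarith
    exact ⟨div_nonneg hy.le hden.le, (div_le_one hden).2 (by linarith)⟩

lemma mul_sub_mul_sub_nonneg {n p tn tp : ℝ} (hn : n ∈ Icc (0 : ℝ) 1)
    (htn : tn ∈ Icc (0 : ℝ) 1) (hp : 0 ≤ p) (htp : 0 ≤ tp)
    (hsat : 0 < n * p → n = 1) (htsat : 0 < tn * tp → tn = 1) :
    0 ≤ (n - tn) * (n * p - tn * tp) := by
  rcases lt_trichotomy (n * p) (tn * tp) with h | h | h
  · have hle := (eq_one_and_le_of_mul_lt htsat hn hp h).2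
    exact mul_nonneg_of_nonpos_of_nonpos (by linarith) (by linarith)
  · simp [h]
  · have hle := (eq_one_and_le_of_mul_lt hsat htn htp h).2
    exact mul_nonneg (by linarith) (by linarith)

lemma bound_B_of_saturation {n p tn tp : ℝ} (hn : n ∈ Icc (0 : ℝ) 1)
    (htn : tn ∈ Icc (0 : ℝ) 1) (hp : 0 ≤ p) (htp : 0 ≤ tp)
    (hsat : 0 < n * p → n = 1) (htsat : 0 < tn * tp → tn = 1) :
    (tn * tp < n * p → n = 1 ∧ tn ≤ n) ∧
    (n * p < tn * tp → tn = 1 ∧ n ≤ tn) ∧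
    0 ≤ (n - tn) * (n * p - tn * tp) ∧
    (n * p ≠ tn * tp →
      (n - tn) + (n * p - tn * tp) ≠ 0 ∧
      0 ≤ (n * p - tn * tp) / ((n - tn) + (n * p - tn * tp)) ∧
      (n * p - tn * tp) / ((n - tn) + (n * p - tn * tp)) ≤ 1) := by
  have hsign := mul_sub_mul_sub_nonneg hn htn hp htp hsat htsat
  refine ⟨eq_one_and_le_of_mul_lt hsat htn htp, eq_one_and_le_of_mul_lt htsat hn hp, hsign,
    fun hne ↦ ⟨add_ne_zero_of_mul_nonneg_s13 hsign (sub_ne_zero.2 hne),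
      div_add_mem_Icc_of_mul_nonneg_s13 hsign⟩⟩

/-- **Lemma 4, bound on `Bᵢ`.** Under the segregation and saturation constraints, for
`i = 1,2`: if `qᵢ > q̃ᵢ` then `nᵢ = 1` (in particular `nᵢ ≥ ñᵢ`); symmetrically if
`q̃ᵢ > qᵢ` then `ñᵢ = 1 ≥ nᵢ`.  Consequently `(nᵢ − ñᵢ)(qᵢ − q̃ᵢ) ≥ 0`, and whenever
`qᵢ ≠ q̃ᵢ` the quotient `Bᵢ := (qᵢ − q̃ᵢ)/((nᵢ − ñᵢ) + (qᵢ − q̃ᵢ))` is well defined and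
satisfies `0 ≤ Bᵢ ≤ 1`.  Here `qᵢ := nᵢ p` and `q̃ᵢ := ñᵢ p̃`, tilde quantities being
written `tn₁, tn₂, tp`. -/
theorem lemma4_bound_B
    (n₁ n₂ p tn₁ tn₂ tp : ℝ)
    (hn₁ : n₁ ∈ Set.Icc (0:ℝ) 1) (hn₂ : n₂ ∈ Set.Icc (0:ℝ) 1)
    (htn₁ : tn₁ ∈ Set.Icc (0:ℝ) 1) (htn₂ : tn₂ ∈ Set.Icc (0:ℝ) 1)
    (hp : 0 ≤ p) (htp : 0 ≤ tp)
    (hseg : n₁ * n₂ = 0) (htseg : tn₁ * tn₂ = 0)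
    (hsat : (1 - (n₁ + n₂)) * p = 0) (htsat : (1 - (tn₁ + tn₂)) * tp = 0) :
    ((tn₁ * tp < n₁ * p → n₁ = 1 ∧ tn₁ ≤ n₁) ∧
     (n₁ * p < tn₁ * tp → tn₁ = 1 ∧ n₁ ≤ tn₁) ∧
     0 ≤ (n₁ - tn₁) * (n₁ * p - tn₁ * tp) ∧
     (n₁ * p ≠ tn₁ * tp →
       (n₁ - tn₁) + (n₁ * p - tn₁ * tp) ≠ 0 ∧
       0 ≤ (n₁ * p - tn₁ * tp) / ((n₁ - tn₁) + (n₁ * p - tn₁ * tp)) ∧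
       (n₁ * p - tn₁ * tp) / ((n₁ - tn₁) + (n₁ * p - tn₁ * tp)) ≤ 1)) ∧
    ((tn₂ * tp < n₂ * p → n₂ = 1 ∧ tn₂ ≤ n₂) ∧
     (n₂ * p < tn₂ * tp → tn₂ = 1 ∧ n₂ ≤ tn₂) ∧
     0 ≤ (n₂ - tn₂) * (n₂ * p - tn₂ * tp) ∧
     (n₂ * p ≠ tn₂ * tp →
       (n₂ - tn₂) + (n₂ * p - tn₂ * tp) ≠ 0 ∧
       0 ≤ (n₂ * p - tn₂ * tp) / ((n₂ - tn₂) + (n₂ * p - tn₂ * tp)) ∧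
       (n₂ * p - tn₂ * tp) / ((n₂ - tn₂) + (n₂ * p - tn₂ * tp)) ≤ 1)) := by
  have hseg' : n₂ * n₁ = 0 := by rwa [mul_comm]
  have htseg' : tn₂ * tn₁ = 0 := by rwa [mul_comm]
  have hsat' : (1 - (n₂ + n₁)) * p = 0 := by rwa [add_comm]
  have htsat' : (1 - (tn₂ + tn₁)) * tp = 0 := by rwa [add_comm]
  exact ⟨bound_B_of_saturation hn₁ htn₁ hp htp (eq_one_of_mul_pos hseg hsat)
      (eq_one_of_mul_pos htseg htsat),
    bound_B_of_saturation hn₂ htn₂ hp htp (eq_one_of_mul_pos hseg' hsat')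
      (eq_one_of_mul_pos htseg' htsat')⟩
end

section
/- Sign of the interface velocity for the tumour spheroid (Section 4.3): Let g₁, g₂ > 0, L > 0 and 0 < R₁ < L. Define λ := √g₁ · cosh(√g₂ (R₁ − L)) · sinh(√g₁ R₁) − √g₂ · sinh(√g₂ (R₁ − L)) · cosh(√g₁ R₁). Then λ > 0, and for any real homeostatic pressures P_M¹, P_M², the interface velocity R₁' := −√(g₁ g₂) (P_M¹ − P_M²) · sinh(√g₂ (R₁ − L)) · cosh(√g₁ R₁) / λ has the same sign as P_M¹ − P_M²: R₁' > 0 if P_M¹ > P_M², R₁' = 0 if P_M¹ = P_M², and R₁' < 0 if P_M¹ < P_M². -/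
/-! Since `R₁ - L < 0 < R₁`, `sinh (√g₂ (R₁ - L)) < 0 < sinh (√g₁ R₁)`, so both terms of `λ`
are positive. The velocity is `P_M¹ - P_M²` times a coefficient that is positive for the same
reason. -/

/-- The denominator `λ` appearing in the tumour-spheroid interface velocity. -/
noncomputable def spheroidLambda (g₁ g₂ L R₁ : ℝ) : ℝ :=
  Real.sqrt g₁ * Real.cosh (Real.sqrt g₂ * (R₁ - L)) * Real.sinh (Real.sqrt g₁ * R₁)
    - Real.sqrt g₂ * Real.sinh (Real.sqrt g₂ * (R₁ - L)) * Real.cosh (Real.sqrt g₁ * R₁)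

/-- The tumour-spheroid interface velocity `R₁' = −√(g₁g₂)(P_M¹−P_M²) sinh(√g₂(R₁−L)) cosh(√g₁R₁)/λ`. -/
noncomputable def spheroidVelocity (g₁ g₂ L R₁ PM₁ PM₂ : ℝ) : ℝ :=
  -Real.sqrt (g₁ * g₂) * (PM₁ - PM₂) * Real.sinh (Real.sqrt g₂ * (R₁ - L))
    * Real.cosh (Real.sqrt g₁ * R₁) / spheroidLambda g₁ g₂ L R₁

open Real

section

variable {g₁ g₂ L R₁ : ℝ}

lemma sinh_sqrt_mul_sub_neg (hg₂ : 0 < g₂) (hRL : R₁ < L) : sinh (√g₂ * (R₁ - L)) < 0 :=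
  sinh_neg_iff.2 (mul_neg_of_pos_of_neg (sqrt_pos.2 hg₂) (sub_neg.2 hRL))

lemma spheroidLambda_pos (hg₁ : 0 < g₁) (hg₂ : 0 < g₂) (hR₁ : 0 < R₁) (hRL : R₁ < L) :
    0 < spheroidLambda g₁ g₂ L R₁ := by
  have ha : 0 < √g₁ := sqrt_pos.2 hg₁
  have hinner : 0 < √g₁ * cosh (√g₂ * (R₁ - L)) * sinh (√g₁ * R₁) :=
    mul_pos (mul_pos ha (cosh_pos _)) (sinh_pos_iff.2 (mul_pos ha hR₁))
  have houter : √g₂ * sinh (√g₂ * (R₁ - L)) * cosh (√g₁ * R₁) < 0 :=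
    mul_neg_of_neg_of_pos
      (mul_neg_of_pos_of_neg (sqrt_pos.2 hg₂) (sinh_sqrt_mul_sub_neg hg₂ hRL)) (cosh_pos _)
  unfold spheroidLambda
  linarith

lemma spheroidVelocity_eq_sub_mul (PM₁ PM₂ : ℝ) :
    spheroidVelocity g₁ g₂ L R₁ PM₁ PM₂ = (PM₁ - PM₂) * spheroidVelocity g₁ g₂ L R₁ 1 0 := by
  unfold spheroidVelocity
  ring

lemma spheroidVelocity_one_zero_pos (hg₁ : 0 < g₁) (hg₂ : 0 < g₂) (hR₁ : 0 < R₁)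
    (hRL : R₁ < L) : 0 < spheroidVelocity g₁ g₂ L R₁ 1 0 := by
  have hnum : 0 < -√(g₁ * g₂) * (1 - 0) * sinh (√g₂ * (R₁ - L)) * cosh (√g₁ * R₁) :=
    mul_pos (mul_pos_of_neg_of_neg (by simpa using sqrt_pos.2 (mul_pos hg₁ hg₂))
      (sinh_sqrt_mul_sub_neg hg₂ hRL)) (cosh_pos _)
  exact div_pos hnum (spheroidLambda_pos hg₁ hg₂ hR₁ hRL)

end

/-- **Sign of the interface velocity for the tumour spheroid (Section 4.3).**
For `g₁, g₂ > 0`, `0 < R₁ < L`, the denominator `λ` is positive, and the interface velocity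
`R₁'` has the same sign as `P_M¹ − P_M²`. -/
theorem interface_velocity_sign
    (g₁ g₂ L R₁ PM₁ PM₂ : ℝ)
    (hg₁ : 0 < g₁) (hg₂ : 0 < g₂) (hR₁ : 0 < R₁) (hRL : R₁ < L) :
    0 < spheroidLambda g₁ g₂ L R₁ ∧
    (PM₂ < PM₁ → 0 < spheroidVelocity g₁ g₂ L R₁ PM₁ PM₂) ∧
    (PM₁ = PM₂ → spheroidVelocity g₁ g₂ L R₁ PM₁ PM₂ = 0) ∧
    (PM₁ < PM₂ → spheroidVelocity g₁ g₂ L R₁ PM₁ PM₂ < 0) := by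
  have hcoeff := spheroidVelocity_one_zero_pos hg₁ hg₂ hR₁ hRL
  rw [spheroidVelocity_eq_sub_mul PM₁ PM₂]
  exact ⟨spheroidLambda_pos hg₁ hg₂ hR₁ hRL,
    fun h => mul_pos (sub_pos.2 h) hcoeff,
    fun h => by rw [h, sub_self, zero_mul],
    fun h => mul_neg_of_neg_of_pos (sub_neg.2 h) hcoeff⟩
end
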